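/- Let φ : Γ₁ → Γ₂ be a homomorphism of finite groups and let θ₁, θ₂ be involutions of Γ₁, Γ₂ respectively with θ₂ ∘ φ = φ ∘ θ₁. Then μ(Γ₂, θ₂) ≤ [Γ₂ : φ(Γ₁)] · μ(Γ₁, θ₁), where [Γ₂ : φ(Γ₁)] is the index of the image of φ in Γ₂. -/
import Mathlib

/-- The subgroup of fixed points of an automorphism `θ` of `G`. -/
def fixedSubgroup {G : Type*} [Group G] (θ : G ≃* G) : Subgroup G where
  carrier := {g | θ g = g}
  one_mem' := map_one θ
  mul_mem' := by
    intro a b ha hb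
    simp only [Set.mem_setOf_eq] at *
    rw [map_mul, ha, hb]
  inv_mem' := by
    intro a ha
    simp only [Set.mem_setOf_eq] at *
    rw [map_inv, ha]

/-- A representation is irreducible if the space is nonzero and the only invariant
subspaces are `⊥` and `⊤`. -/
def IsIrredRep {G V : Type*} [Group G] [AddCommGroup V] [Module ℂ V]
    (ρ : Representation ℂ G V) : Prop :=
  Nontrivial V ∧ ∀ U : Submodule ℂ V, (∀ g : G, ∀ v ∈ U, ρ g v ∈ U) → U = ⊥ ∨ U = ⊤


/-- The `χ`-eigenspace `{v | ρ h v = χ h • v for all h ∈ H}` of a subgroup `H` acting via a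
one-dimensional character `χ : H → ℂˣ`. -/
def charEigenspace {G V : Type*} [Group G] [AddCommGroup V] [Module ℂ V]
    (ρ : Representation ℂ G V) (H : Subgroup G) (χ : H →* ℂˣ) : Submodule ℂ V where
  carrier := {v | ∀ h : H, ρ (h : G) v = (χ h : ℂ) • v}
  add_mem' := by
    intro a b ha hb h
    rw [map_add, ha h, hb h, smul_add]
  zero_mem' := by
    intro h
    rw [map_zero, smul_zero]
  smul_mem' := by
    intro c v hv h
    rw [map_smul, hv h, smul_comm]

/-- `μ(Γ, θ)`: the maximum over irreducible complex representations `ρ` of `Γ` and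
one-dimensional characters `χ` of `Γ^θ` of the dimension of the `χ`-eigenspace of `Γ^θ`. -/
noncomputable def mu (Γ : Type*) [Group Γ] [Fintype Γ] (θ : Γ ≃* Γ) : ℕ :=
  sSup {d : ℕ | ∃ (m : ℕ) (ρ : Representation ℂ Γ (Fin m → ℂ))
    (χ : (fixedSubgroup θ) →* ℂˣ), IsIrredRep ρ ∧
    d = Module.finrank ℂ (charEigenspace ρ (fixedSubgroup θ) χ)}

open Module

section Aux

variable {Γ : Type*} [Group Γ] {V V' : Type*} [AddCommGroup V] [Module ℂ V]
  [AddCommGroup V'] [Module ℂ V']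

/-- A submodule is invariant under a representation. -/
def IsInvt (σ : Representation ℂ Γ V) (U : Submodule ℂ V) : Prop :=
  ∀ g : Γ, ∀ v ∈ U, σ g v ∈ U

lemma mem_charEigenspace {σ : Representation ℂ Γ V} {H : Subgroup Γ} {χ : H →* ℂˣ} {v : V} :
    v ∈ charEigenspace σ H χ ↔ ∀ h : H, σ (h : Γ) v = (χ h : ℂ) • v := Iff.rfl

/-- Transport of a representation along a linear equivalence. -/
def conjRep (σ : Representation ℂ Γ V) (e : V ≃ₗ[ℂ] V') : Representation ℂ Γ V' where
  toFun g := e.toLinearMap ∘ₗ σ g ∘ₗ e.symm.toLinearMap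
  map_one' := by ext v; simp
  map_mul' g h := by ext v; simp

lemma conjRep_apply (σ : Representation ℂ Γ V) (e : V ≃ₗ[ℂ] V') (g : Γ) (v : V') :
    conjRep σ e g v = e (σ g (e.symm v)) := rfl

lemma isIrredRep_conjRep {σ : Representation ℂ Γ V} (hirr : IsIrredRep σ) (e : V ≃ₗ[ℂ] V') :
    IsIrredRep (conjRep σ e) := by
  obtain ⟨hnt, hmin⟩ := hirr
  refine ⟨e.toEquiv.symm.nontrivial, ?_⟩
  intro U hU
  have hinv : ∀ g : Γ, ∀ v ∈ U.map e.symm.toLinearMap, σ g v ∈ U.map e.symm.toLinearMap := by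
    rintro g v ⟨u, hu, rfl⟩
    refine ⟨e (σ g (e.symm u)), hU g u hu, by simp⟩
  have hmap : (U.map e.symm.toLinearMap).map e.toLinearMap = U := by
    ext v
    simp only [Submodule.mem_map]
    constructor
    · rintro ⟨u, ⟨w, hw, rfl⟩, rfl⟩
      simpa using hw
    · intro hv
      exact ⟨e.symm v, ⟨v, hv, rfl⟩, by simp⟩
  rcases hmin _ hinv with h | h
  · left; rw [← hmap, h, Submodule.map_bot]
  · right; rw [← hmap, h, Submodule.map_top, LinearMap.range_eq_top]
    exact e.surjective

lemma charEigenspace_conjRep (σ : Representation ℂ Γ V) (e : V ≃ₗ[ℂ] V')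
    (H : Subgroup Γ) (χ : H →* ℂˣ) :
    charEigenspace (conjRep σ e) H χ = (charEigenspace σ H χ).map e.toLinearMap := by
  ext v
  constructor
  · intro hv
    refine ⟨e.symm v, fun h => ?_, by simp⟩
    have := hv h
    rw [conjRep_apply] at this
    apply e.injective
    rw [this, map_smul]
    simp
  · rintro ⟨u, hu, rfl⟩ h
    have h2 : e.symm ((e : V →ₗ[ℂ] V') u) = u := by simp
    rw [conjRep_apply, h2, hu h, map_smul]
    rfl

/-- The restriction of a representation to an invariant submodule. -/
def subRep (σ : Representation ℂ Γ V) (U : Submodule ℂ V) (hU : IsInvt σ U) :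
    Representation ℂ Γ U where
  toFun g := (σ g).restrict (fun v hv => hU g v hv)
  map_one' := by
    ext v
    simp [LinearMap.restrict_apply]
  map_mul' g h := by
    ext v
    simp [LinearMap.restrict_apply]

lemma subRep_apply (σ : Representation ℂ Γ V) (U : Submodule ℂ V) (hU : IsInvt σ U)
    (g : Γ) (v : U) : (subRep σ U hU g v : V) = σ g (v : V) := rfl

end Aux

section Aux2

variable {Γ : Type*} [Group Γ] [Fintype Γ] {V : Type*} [AddCommGroup V] [Module ℂ V]

/-- The dimension of an irreducible representation of a finite group is at most the
order of the group. -/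
lemma irred_dim_le_card {m : ℕ} (ρ : Representation ℂ Γ (Fin m → ℂ))
    (h : IsIrredRep ρ) : m ≤ Fintype.card Γ := by
  classical
  obtain ⟨hnt, hmin⟩ := h
  obtain ⟨v, hv⟩ := exists_ne (0 : Fin m → ℂ)
  set s : Set (Fin m → ℂ) := Set.range (fun g : Γ => ρ g v) with hs
  have hinv : ∀ g : Γ, ∀ w ∈ Submodule.span ℂ s, ρ g w ∈ Submodule.span ℂ s := by
    intro g w hw
    have : Submodule.map (ρ g) (Submodule.span ℂ s) ≤ Submodule.span ℂ s := by
      rw [Submodule.map_span]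
      apply Submodule.span_mono
      rintro x ⟨y, ⟨g', rfl⟩, rfl⟩
      refine ⟨g * g', ?_⟩
      show ρ (g * g') v = ρ g (ρ g' v)
      rw [map_mul]
      rfl
    exact this ⟨w, hw, rfl⟩
  have hne : Submodule.span ℂ s ≠ ⊥ := by
    intro hbot
    apply hv
    have : v ∈ Submodule.span ℂ s := Submodule.subset_span ⟨1, show ρ 1 v = v by rw [map_one]; rfl⟩
    rw [hbot] at this
    simpa using this
  have htop : Submodule.span ℂ s = ⊤ := (hmin _ hinv).resolve_left hne
  have hfr : finrank ℂ (Fin m → ℂ) = m := by simp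
  calc m = finrank ℂ (Fin m → ℂ) := hfr.symm
    _ = finrank ℂ (⊤ : Submodule ℂ (Fin m → ℂ)) := (finrank_top ℂ _).symm
    _ = finrank ℂ (Submodule.span ℂ s) := by rw [htop]
    _ ≤ s.toFinset.card := finrank_span_le_card s
    _ ≤ Fintype.card Γ := by
        have hsub : s.toFinset ⊆ Finset.univ.image (fun g : Γ => ρ g v) := by
          intro x hx
          rw [Set.mem_toFinset] at hx
          obtain ⟨g, rfl⟩ := hx
          exact Finset.mem_image.mpr ⟨g, Finset.mem_univ g, rfl⟩
        exact (Finset.card_le_card hsub).trans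
          ((Finset.card_image_le).trans (le_of_eq (Finset.card_univ)))

lemma mu_set_le (θ : Γ ≃* Γ) :
    ∀ d ∈ {d : ℕ | ∃ (m : ℕ) (ρ : Representation ℂ Γ (Fin m → ℂ))
      (χ : (fixedSubgroup θ) →* ℂˣ), IsIrredRep ρ ∧
      d = Module.finrank ℂ (charEigenspace ρ (fixedSubgroup θ) χ)},
      d ≤ Fintype.card Γ := by
  rintro d ⟨m, ρ, χ, hirr, rfl⟩
  calc finrank ℂ (charEigenspace ρ (fixedSubgroup θ) χ) ≤ finrank ℂ (Fin m → ℂ) :=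
        Submodule.finrank_le _
    _ = m := by simp
    _ ≤ Fintype.card Γ := irred_dim_le_card ρ hirr

/-- Any irreducible representation on an abstract finite-dimensional space contributes to `mu`. -/
lemma le_mu (θ : Γ ≃* Γ) (W : Type*) [AddCommGroup W] [Module ℂ W] [FiniteDimensional ℂ W]
    (σ : Representation ℂ Γ W) (hirr : IsIrredRep σ) (ψ : fixedSubgroup θ →* ℂˣ) :
    finrank ℂ (charEigenspace σ (fixedSubgroup θ) ψ) ≤ mu Γ θ := by
  set e := (Module.finBasis ℂ W).equivFun
  set τ := conjRep σ e with hτdef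
  have hτ : IsIrredRep τ := isIrredRep_conjRep hirr e
  have hdim : finrank ℂ (charEigenspace σ (fixedSubgroup θ) ψ)
      = finrank ℂ (charEigenspace τ (fixedSubgroup θ) ψ) := by
    rw [hτdef, charEigenspace_conjRep]
    exact (LinearEquiv.finrank_map_eq e _).symm
  rw [hdim]
  exact le_csSup ⟨Fintype.card Γ, mu_set_le θ⟩ ⟨finrank ℂ W, τ, ψ, hτ, rfl⟩

variable (σ : Representation ℂ Γ V)

lemma subRep_irred {U : Submodule ℂ V} (hU : IsInvt σ U) (hne : U ≠ ⊥)
    (hmin : ∀ W ≤ U, IsInvt σ W → W = ⊥ ∨ W = U) : IsIrredRep (subRep σ U hU) := by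
  refine ⟨Submodule.nontrivial_iff_ne_bot.mpr hne, ?_⟩
  intro W' hW'
  set W := W'.map U.subtype with hWdef
  have hWU : W ≤ U := by
    rintro x ⟨y, hy, rfl⟩
    exact y.2
  have hWinv : IsInvt σ W := by
    rintro g x ⟨y, hy, rfl⟩
    exact ⟨subRep σ U hU g y, hW' g y hy, rfl⟩
  have hinj := Submodule.map_injective_of_injective (U.injective_subtype)
  rcases hmin W hWU hWinv with h | h
  · left
    apply hinj
    rw [← hWdef, h, Submodule.map_bot]
  · right
    apply hinj
    rw [← hWdef, h, Submodule.map_top, Submodule.range_subtype]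

lemma subRep_eigen {U : Submodule ℂ V} (hU : IsInvt σ U) (H : Subgroup Γ) (ψ : H →* ℂˣ) :
    finrank ℂ (charEigenspace (subRep σ U hU) H ψ)
      = finrank ℂ (charEigenspace σ H ψ ⊓ U : Submodule ℂ V) := by
  have hEq : Submodule.map U.subtype (charEigenspace (subRep σ U hU) H ψ)
      = (charEigenspace σ H ψ ⊓ U : Submodule ℂ V) := by
    ext v
    simp only [Submodule.mem_map, Submodule.mem_inf]
    constructor
    · rintro ⟨y, hy, rfl⟩
      refine ⟨fun h => ?_, y.2⟩
      have h2 := congrArg (Subtype.val) (hy h)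
      simpa [subRep_apply] using h2
    · rintro ⟨hv, hvU⟩
      refine ⟨⟨v, hvU⟩, fun h => ?_, rfl⟩
      apply Subtype.ext
      simpa [subRep_apply] using hv h
  rw [← hEq, Submodule.finrank_map_subtype_eq]

lemma finrank_iSup_le_sum [FiniteDimensional ℂ V] {k : ℕ} (f : Fin k → Submodule ℂ V) :
    finrank ℂ (⨆ i, f i : Submodule ℂ V) ≤ ∑ i, finrank ℂ (f i) := by
  induction k with
  | zero => simp [iSup_of_empty]
  | succ n IH =>
    have hsup : (⨆ i, f i) = f 0 ⊔ ⨆ i : Fin n, f i.succ := by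
      apply le_antisymm
      · exact iSup_le (fun i => Fin.cases le_sup_left
          (fun j => le_sup_of_le_right (le_iSup (fun i : Fin n => f i.succ) j)) i)
      · exact sup_le (le_iSup f 0) (iSup_le fun j => le_iSup f j.succ)
    rw [hsup, Fin.sum_univ_succ]
    have h1 : finrank ℂ (f 0 ⊔ ⨆ i : Fin n, f i.succ : Submodule ℂ V)
        ≤ finrank ℂ (f 0) + finrank ℂ (⨆ i : Fin n, f i.succ : Submodule ℂ V) := by
      have := Submodule.finrank_sup_add_finrank_inf_eq (f 0) (⨆ i : Fin n, f i.succ)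
      omega
    exact h1.trans (Nat.add_le_add_left (IH _) _)

end Aux2

section Maschke

variable {Γ : Type*} [Group Γ] [Fintype Γ] {V : Type*} [AddCommGroup V] [Module ℂ V]

/-- Maschke: an invariant submodule of an invariant submodule has an invariant complement. -/
lemma exists_invt_compl (σ : Representation ℂ Γ V)
    {U N : Submodule ℂ V} (hU : IsInvt σ U) (hN : IsInvt σ N) (hUN : U ≤ N) :
    ∃ N' : Submodule ℂ V, IsInvt σ N' ∧ N' ≤ N ∧ U ⊓ N' = ⊥ ∧ U ⊔ N' = N := by
  classical
  obtain ⟨C, hC⟩ := Submodule.exists_isCompl U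
  set p : V →ₗ[ℂ] V := U.subtype ∘ₗ (U.linearProjOfIsCompl C hC) with hp
  have hpU : ∀ u ∈ U, p u = u := by
    intro u hu
    show (U.linearProjOfIsCompl C hC u : V) = u
    have : U.linearProjOfIsCompl C hC ((⟨u, hu⟩ : U) : V) = ⟨u, hu⟩ :=
      Submodule.linearProjOfIsCompl_apply_left hC ⟨u, hu⟩
    rw [this]
  have hpran : ∀ v : V, p v ∈ U := fun v => (U.linearProjOfIsCompl C hC v).2
  set c : ℂ := (Fintype.card Γ : ℂ)⁻¹ with hc
  set q : V →ₗ[ℂ] V := c • ∑ g : Γ, ((σ g) ∘ₗ p ∘ₗ (σ g⁻¹)) with hq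
  have hcard : (Fintype.card Γ : ℂ) ≠ 0 := Nat.cast_ne_zero.mpr Fintype.card_ne_zero
  have hq_apply : ∀ v : V, q v = c • ∑ g : Γ, σ g (p (σ g⁻¹ v)) := by
    intro v
    rw [hq]
    simp [LinearMap.sum_apply]
  have hqU : ∀ v : V, q v ∈ U := by
    intro v
    rw [hq_apply]
    exact Submodule.smul_mem _ _ (Submodule.sum_mem _ fun g _ => hU g _ (hpran _))
  have hσσ : ∀ (g : Γ) (v : V), σ g (σ g⁻¹ v) = v := by
    intro g v
    rw [← Module.End.mul_apply, ← map_mul, mul_inv_cancel, map_one, Module.End.one_apply]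
  have hqid : ∀ u ∈ U, q u = u := by
    intro u hu
    rw [hq_apply]
    have hterm : ∀ g : Γ, σ g (p (σ g⁻¹ u)) = u := by
      intro g
      rw [hpU _ (hU g⁻¹ u hu), hσσ]
    rw [Finset.sum_congr rfl (fun g _ => hterm g)]
    rw [Finset.sum_const, Finset.card_univ, ← Nat.cast_smul_eq_nsmul ℂ, smul_smul, hc,
      inv_mul_cancel₀ hcard, one_smul]
  have hqcomm : ∀ (g : Γ) (v : V), q (σ g v) = σ g (q v) := by
    intro h v
    rw [hq_apply, hq_apply, map_smul]
    congr 1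
    rw [map_sum]
    refine (Fintype.sum_bijective (fun g => h * g)
      (Group.mulLeft_bijective h) _ _ (fun g => ?_)).symm
    have e1 : σ (h * g)⁻¹ (σ h v) = σ g⁻¹ v := by
      rw [← Module.End.mul_apply, ← map_mul]
      congr 1
      group
    show σ h (σ g (p (σ g⁻¹ v))) = σ (h * g) (p (σ (h * g)⁻¹ (σ h v)))
    rw [e1, map_mul, Module.End.mul_apply]
  refine ⟨N ⊓ LinearMap.ker q, ?_, inf_le_left, ?_, ?_⟩
  · rintro g v ⟨hvN, hvK⟩
    refine ⟨hN g v hvN, ?_⟩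
    have : q (σ g v) = σ g (q v) := hqcomm g v
    rw [LinearMap.mem_ker.mp hvK] at this
    simpa [LinearMap.mem_ker] using this
  · apply le_bot_iff.mp
    rintro x ⟨hxU, hxN, hxK⟩
    have : q x = x := hqid x hxU
    rw [LinearMap.mem_ker.mp hxK] at this
    simpa using this.symm
  · apply le_antisymm
    · exact sup_le hUN inf_le_left
    · intro x hx
      have hqx : q x ∈ U := hqU x
      have hx1 : x - q x ∈ N ⊓ LinearMap.ker q := by
        refine ⟨sub_mem hx (hUN hqx), ?_⟩
        show q (x - q x) = 0
        rw [map_sub, hqid _ hqx, sub_self]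
      have : x = q x + (x - q x) := by abel
      rw [this]
      exact Submodule.add_mem_sup hqx hx1

end Maschke

section Decomp

variable {Γ : Type*} [Group Γ] [Fintype Γ] {V : Type*} [AddCommGroup V] [Module ℂ V]
  [FiniteDimensional ℂ V]

lemma decomp (σ : Representation ℂ Γ V) (H : Subgroup Γ) (ψ : H →* ℂˣ) :
    ∀ (d : ℕ) (N : Submodule ℂ V), finrank ℂ N = d → IsInvt σ N →
    ∃ (k : ℕ) (U : Fin k → Submodule ℂ V),
      (∀ i, U i ≠ ⊥) ∧ (∀ i, IsInvt σ (U i)) ∧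
      (∀ i, ∀ W ≤ U i, IsInvt σ W → W = ⊥ ∨ W = U i) ∧
      ((∑ i, finrank ℂ (U i)) ≤ d) ∧
      (∀ v ∈ N, (∀ h : H, σ (h : Γ) v = (ψ h : ℂ) • v) →
        v ∈ ⨆ i, (charEigenspace σ H ψ ⊓ U i : Submodule ℂ V)) := by
  intro d
  induction d using Nat.strong_induction_on with
  | _ d IH =>
    intro N hfr hN
    by_cases hbot : N = ⊥
    · refine ⟨0, Fin.elim0, fun i => i.elim0, fun i => i.elim0, fun i => i.elim0, by simp, ?_⟩
      rintro v hv _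
      rw [hbot, Submodule.mem_bot] at hv
      rw [hv]
      exact Submodule.zero_mem _
    · classical
      have hex : ∃ r : ℕ, ∃ W : Submodule ℂ V, W ≤ N ∧ IsInvt σ W ∧ W ≠ ⊥ ∧ finrank ℂ W = r :=
        ⟨d, N, le_refl N, hN, hbot, hfr⟩
      obtain ⟨U, hUN, hUinv, hUne, hUfr⟩ := Nat.find_spec hex
      have hmin : ∀ W ≤ U, IsInvt σ W → W = ⊥ ∨ W = U := by
        intro W hWU hWinv
        by_cases hW : W = ⊥
        · exact Or.inl hW
        · right
          have h1 : Nat.find hex ≤ finrank ℂ W :=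
            Nat.find_min' hex ⟨W, hWU.trans hUN, hWinv, hW, rfl⟩
          exact Submodule.eq_of_le_of_finrank_le hWU (hUfr ▸ h1)
      obtain ⟨N', hN'inv, hN'N, hinf, hsup⟩ := exists_invt_compl σ hUinv hN hUN
      have hdim : finrank ℂ U + finrank ℂ N' = d := by
        have h := Submodule.finrank_sup_add_finrank_inf_eq U N'
        rw [hsup, hinf, hfr, finrank_bot] at h
        omega
      have hUpos : 0 < finrank ℂ U := by
        rcases Nat.eq_zero_or_pos (finrank ℂ U) with h | h
        · exact absurd (Submodule.finrank_eq_zero.mp h) hUne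
        · exact h
      obtain ⟨k, Us, hb1, hb2, hb3, hb4, hb5⟩ :=
        IH (finrank ℂ N') (by omega) N' rfl hN'inv
      refine ⟨k + 1, Fin.cons U Us, ?_, ?_, ?_, ?_, ?_⟩
      · intro i
        refine Fin.cases ?_ ?_ i
        · simpa using hUne
        · intro j; simpa using hb1 j
      · intro i
        refine Fin.cases ?_ ?_ i
        · simpa using hUinv
        · intro j; simpa using hb2 j
      · intro i
        refine Fin.cases ?_ ?_ i
        · simpa using hmin
        · intro j; simpa using hb3 j
      · have hs : (∑ i : Fin (k+1), finrank ℂ ((Fin.cons U Us : Fin (k+1) → Submodule ℂ V) i))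
            = finrank ℂ U + ∑ j : Fin k, finrank ℂ (Us j) := by
          rw [Fin.sum_univ_succ]
          rfl
        rw [hs]
        omega
      · intro v hvN hveig
        rw [← hsup] at hvN
        obtain ⟨u, hu, w, hw, rfl⟩ := Submodule.mem_sup.mp hvN
        have key : ∀ h : H, σ (h : Γ) u - (ψ h : ℂ) • u ∈ U ⊓ N' := by
          intro h
          have h0 := hveig h
          rw [map_add, smul_add] at h0
          have heq : σ (h : Γ) u - (ψ h : ℂ) • u = (ψ h : ℂ) • w - σ (h : Γ) w := by
            rw [sub_eq_sub_iff_add_eq_add, h0, add_comm]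
          refine ⟨sub_mem (hUinv _ u hu) (Submodule.smul_mem _ _ hu), ?_⟩
          rw [heq]
          exact sub_mem (Submodule.smul_mem _ _ hw) (hN'inv _ w hw)
        have hueig : ∀ h : H, σ (h : Γ) u = (ψ h : ℂ) • u := by
          intro h
          have := key h
          rw [hinf, Submodule.mem_bot] at this
          exact sub_eq_zero.mp this
        have hweig : ∀ h : H, σ (h : Γ) w = (ψ h : ℂ) • w := by
          intro h
          have h0 := hveig h
          rw [map_add, smul_add, hueig h] at h0
          exact add_left_cancel h0
        have hu_mem : u ∈ ⨆ i, (charEigenspace σ H ψ ⊓ (Fin.cons U Us : Fin (k+1) → Submodule ℂ V) i : Submodule ℂ V) := by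
          apply Submodule.mem_iSup_of_mem (0 : Fin (k+1))
          rw [Fin.cons_zero]
          exact ⟨hueig, hu⟩
        have hw_mem : w ∈ ⨆ i, (charEigenspace σ H ψ ⊓ (Fin.cons U Us : Fin (k+1) → Submodule ℂ V) i : Submodule ℂ V) := by
          have hw2 := hb5 w hw hweig
          refine (iSup_le fun j => ?_ : (⨆ j, (charEigenspace σ H ψ ⊓ Us j : Submodule ℂ V)) ≤ _) hw2
          have : Us j = (Fin.cons U Us : Fin (k+1) → Submodule ℂ V) j.succ := by
            rw [Fin.cons_succ]
          rw [this]
          exact le_iSup (fun i => (charEigenspace σ H ψ ⊓ (Fin.cons U Us : Fin (k+1) → Submodule ℂ V) i : Submodule ℂ V)) j.succ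
        exact Submodule.add_mem _ hu_mem hw_mem

end Decomp

section IndexBound

variable {Γ₂ : Type*} [Group Γ₂] [Fintype Γ₂] {V : Type*} [AddCommGroup V] [Module ℂ V]
  [FiniteDimensional ℂ V]

/-- If `ρ` is irreducible and `U` is a nonzero `Δ`-invariant subspace, then
`dim V ≤ [Γ₂ : Δ] * dim U`. -/
lemma index_bound (ρ : Representation ℂ Γ₂ V) (hirr : IsIrredRep ρ) (Δ : Subgroup Γ₂)
    (U : Submodule ℂ V) (hinv : ∀ g ∈ Δ, ∀ v ∈ U, ρ g v ∈ U) (hne : U ≠ ⊥) :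
    finrank ℂ V ≤ Δ.index * finrank ℂ U := by
  classical
  haveI : Fintype (Γ₂ ⧸ Δ) := Fintype.ofFinite _
  set T : ((Γ₂ ⧸ Δ) → U) →ₗ[ℂ] V :=
    { toFun := fun u => ∑ c : Γ₂ ⧸ Δ, ρ c.out (u c : V)
      map_add' := by
        intro u1 u2
        rw [← Finset.sum_add_distrib]
        refine Finset.sum_congr rfl fun c _ => ?_
        rw [Pi.add_apply, Submodule.coe_add, map_add]
      map_smul' := by
        intro a u
        rw [RingHom.id_apply, Finset.smul_sum]
        refine Finset.sum_congr rfl fun c _ => ?_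
        rw [Pi.smul_apply, Submodule.coe_smul, map_smul] } with hT
  have hT_apply : ∀ u, T u = ∑ c : Γ₂ ⧸ Δ, ρ c.out (u c : V) := fun u => rfl
  have hδ : ∀ (g : Γ₂) (c' : Γ₂ ⧸ Δ), (c'.out)⁻¹ * (g * (g⁻¹ • c').out) ∈ Δ := by
    intro g c'
    rw [← QuotientGroup.eq]
    rw [QuotientGroup.out_eq']
    have : QuotientGroup.mk (g * (g⁻¹ • c').out) = g • (QuotientGroup.mk (g⁻¹ • c').out : Γ₂ ⧸ Δ) := by
      rw [MulAction.Quotient.smul_mk, smul_eq_mul]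
    rw [this, QuotientGroup.out_eq', smul_inv_smul]
  have hrange : ∀ (g : Γ₂), ∀ v ∈ LinearMap.range T, ρ g v ∈ LinearMap.range T := by
    rintro g v ⟨u, rfl⟩
    refine ⟨fun c' => ⟨ρ ((c'.out)⁻¹ * (g * (g⁻¹ • c').out)) (u (g⁻¹ • c') : V),
      hinv _ (hδ g c') _ (u (g⁻¹ • c')).2⟩, ?_⟩
    rw [hT_apply, hT_apply, map_sum]
    refine (Fintype.sum_bijective (fun c => g • c) (MulAction.bijective g) _ _ (fun c => ?_)).symm
    show ρ g (ρ c.out (u c : V))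
      = ρ ((g • c).out) (ρ (((g • c).out)⁻¹ * (g * (g⁻¹ • (g • c)).out)) (u (g⁻¹ • (g • c)) : V))
    rw [inv_smul_smul, ← Module.End.mul_apply, ← map_mul, ← Module.End.mul_apply, ← map_mul]
    congr 2
    group
  have hne' : LinearMap.range T ≠ ⊥ := by
    obtain ⟨x, hxU, hx0⟩ := Submodule.ne_bot_iff U |>.mp hne
    intro hbot
    set u₀ : (Γ₂ ⧸ Δ) → U := fun c => if c = QuotientGroup.mk 1 then ⟨x, hxU⟩ else 0 with hu₀
    have hTu₀ : T u₀ = ρ ((QuotientGroup.mk 1 : Γ₂ ⧸ Δ).out) x := by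
      rw [hT_apply]
      rw [Finset.sum_eq_single (QuotientGroup.mk 1 : Γ₂ ⧸ Δ)]
      · simp [hu₀]
      · intro c _ hc
        simp [hu₀, hc]
      · intro hmem
        exact absurd (Finset.mem_univ _) hmem
    have : T u₀ ∈ LinearMap.range T := ⟨u₀, rfl⟩
    rw [hbot, Submodule.mem_bot, hTu₀] at this
    apply hx0
    set a := (QuotientGroup.mk 1 : Γ₂ ⧸ Δ).out
    have := congrArg (ρ a⁻¹) this
    rw [← Module.End.mul_apply, ← map_mul, inv_mul_cancel, map_one, Module.End.one_apply,
      map_zero] at this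
    exact this
  have htop : LinearMap.range T = ⊤ := (hirr.2 _ hrange).resolve_left hne'
  calc finrank ℂ V = finrank ℂ (⊤ : Submodule ℂ V) := (finrank_top ℂ V).symm
    _ = finrank ℂ (LinearMap.range T) := by rw [htop]
    _ ≤ finrank ℂ ((Γ₂ ⧸ Δ) → U) := LinearMap.finrank_range_le T
    _ = Fintype.card (Γ₂ ⧸ Δ) * finrank ℂ U := by
        rw [finrank_pi_fintype, Finset.sum_const, Finset.card_univ, smul_eq_mul]
    _ = Δ.index * finrank ℂ U := by
        rw [Subgroup.index_eq_card, Nat.card_eq_fintype_card]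

end IndexBound

lemma nat_sSup_le {S : Set ℕ} {n : ℕ} (h : ∀ a ∈ S, a ≤ n) : sSup S ≤ n := by
  rcases S.eq_empty_or_nonempty with rfl | hne
  · simp [csSup_empty]
  · exact csSup_le hne h

/-- If `φ : Γ₁ → Γ₂` is a homomorphism of finite groups intertwining involutions `θ₁`, `θ₂`,
then `μ(Γ₂, θ₂) ≤ [Γ₂ : φ(Γ₁)] · μ(Γ₁, θ₁)`. -/
theorem stmt_16 (Γ₁ Γ₂ : Type) [Group Γ₁] [Fintype Γ₁] [Group Γ₂] [Fintype Γ₂]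
    (φ : Γ₁ →* Γ₂) (θ₁ : Γ₁ ≃* Γ₁) (θ₂ : Γ₂ ≃* Γ₂)
    (h₁ : ∀ g : Γ₁, θ₁ (θ₁ g) = g) (h₂ : ∀ g : Γ₂, θ₂ (θ₂ g) = g)
    (hcomm : ∀ g : Γ₁, θ₂ (φ g) = φ (θ₁ g)) :
    mu Γ₂ θ₂ ≤ φ.range.index * mu Γ₁ θ₁ := by
  classical
  have main : ∀ d ∈ {d : ℕ | ∃ (m : ℕ) (ρ : Representation ℂ Γ₂ (Fin m → ℂ))
      (χ : (fixedSubgroup θ₂) →* ℂˣ), IsIrredRep ρ ∧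
      d = Module.finrank ℂ (charEigenspace ρ (fixedSubgroup θ₂) χ)},
      d ≤ φ.range.index * mu Γ₁ θ₁ := by
    rintro d ⟨m, ρ, χ, hirr, rfl⟩
    have hφfix : ∀ h : (fixedSubgroup θ₁), φ (h : Γ₁) ∈ (fixedSubgroup θ₂) := by
      intro h
      show θ₂ (φ (h : Γ₁)) = φ (h : Γ₁)
      rw [hcomm]
      congr 1
      exact h.2
    set φ' : (fixedSubgroup θ₁) →* (fixedSubgroup θ₂) := (φ.comp (fixedSubgroup θ₁).subtype).codRestrict (fixedSubgroup θ₂) hφfix with hφ'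
    set ψ : (fixedSubgroup θ₁) →* ℂˣ := χ.comp φ' with hψ
    set σ : Representation ℂ Γ₁ (Fin m → ℂ) := ρ.comp φ with hσ
    have hE : charEigenspace ρ (fixedSubgroup θ₂) χ ≤ charEigenspace σ (fixedSubgroup θ₁) ψ := by
      intro v hv h
      exact hv (φ' h)
    have hm : finrank ℂ (⊤ : Submodule ℂ (Fin m → ℂ)) = m := by
      rw [finrank_top]; simp
    obtain ⟨k, Us, hb1, hb2, hb3, hb4, hb5⟩ :=
      decomp σ (fixedSubgroup θ₁) ψ m ⊤ hm (fun g v _ => Submodule.mem_top)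
    have hper : ∀ i : Fin k,
        finrank ℂ (charEigenspace σ (fixedSubgroup θ₁) ψ ⊓ Us i : Submodule ℂ (Fin m → ℂ)) ≤ mu Γ₁ θ₁ := by
      intro i
      rw [← subRep_eigen σ (hb2 i) (fixedSubgroup θ₁) ψ]
      exact le_mu θ₁ (Us i) (subRep σ (Us i) (hb2 i))
        (subRep_irred σ (hb2 i) (hb1 i) (hb3 i)) ψ
    have hd : finrank ℂ (charEigenspace ρ (fixedSubgroup θ₂) χ) ≤ k * mu Γ₁ θ₁ := by
      have h1 : charEigenspace σ (fixedSubgroup θ₁) ψ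
          ≤ ⨆ i, (charEigenspace σ (fixedSubgroup θ₁) ψ ⊓ Us i : Submodule ℂ (Fin m → ℂ)) :=
        fun v hv => hb5 v Submodule.mem_top hv
      calc finrank ℂ (charEigenspace ρ (fixedSubgroup θ₂) χ)
          ≤ finrank ℂ (charEigenspace σ (fixedSubgroup θ₁) ψ) := Submodule.finrank_mono hE
        _ ≤ finrank ℂ (⨆ i, (charEigenspace σ (fixedSubgroup θ₁) ψ ⊓ Us i) : Submodule ℂ (Fin m → ℂ)) :=
            Submodule.finrank_mono h1
        _ ≤ ∑ i, finrank ℂ (charEigenspace σ (fixedSubgroup θ₁) ψ ⊓ Us i : Submodule ℂ (Fin m → ℂ)) :=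
            finrank_iSup_le_sum _
        _ ≤ ∑ _i : Fin k, mu Γ₁ θ₁ := Finset.sum_le_sum (fun i _ => hper i)
        _ = k * mu Γ₁ θ₁ := by
            rw [Finset.sum_const, Finset.card_univ, Fintype.card_fin, smul_eq_mul]
    have hmpos : 0 < m := by
      rcases Nat.eq_zero_or_pos m with rfl | h
      · obtain ⟨x, y, hxy⟩ := hirr.1
        exact absurd (Subsingleton.elim x y) hxy
      · exact h
    have hki : k ≤ φ.range.index := by
      have hich : ∀ i : Fin k, m ≤ φ.range.index * finrank ℂ (Us i) := by
        intro i
        have hUsinv : ∀ g ∈ φ.range, ∀ v ∈ Us i, ρ g v ∈ Us i := by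
          rintro g ⟨g₁, rfl⟩ v hv
          exact hb2 i g₁ v hv
        have := index_bound ρ hirr φ.range (Us i) hUsinv (hb1 i)
        simpa using this
      have hmul : k * m ≤ φ.range.index * m := by
        calc k * m = ∑ _i : Fin k, m := by
              rw [Finset.sum_const, Finset.card_univ, Fintype.card_fin, smul_eq_mul]
          _ ≤ ∑ i : Fin k, φ.range.index * finrank ℂ (Us i) :=
              Finset.sum_le_sum (fun i _ => hich i)
          _ = φ.range.index * ∑ i, finrank ℂ (Us i) := by rw [Finset.mul_sum]
          _ ≤ φ.range.index * m := Nat.mul_le_mul_left _ hb4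
      exact Nat.le_of_mul_le_mul_right hmul hmpos
    exact hd.trans (Nat.mul_le_mul_right _ hki)
  exact nat_sSup_le main
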